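/- arXiv:2312.04348 — 3 statements merged into one kernel-verified Lean document; each statement's English description precedes it below -/
import Mathlib

section
/- Let a : Fin n → ℕ+ with total sum c = ∑ i, a i, and let b be a positive integer with 2*b < c. Define a' : Fin (n+1) → ℕ+ by a' i = a i for i < n and a' n = c - 2*b. Then (∃ S ⊆ Fin n, ∑_{i ∈ S} a i = b) if and only if (∃ T ⊆ Fin (n+1), ∑_{i ∈ T} a' i = ∑_{i ∉ T} a' i). -/
theorem stmt2 (n : ℕ) (a : Fin n → ℕ+) (c b : ℕ) (hc : c = ∑ i, (a i : ℕ))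
    (hbpos : 0 < b) (hble : b ≤ c / 2) (hbc : 2 * b < c)
    (a' : Fin (n + 1) → ℕ+)
    (ha1 : ∀ i : Fin n, (a' i.castSucc : ℕ) = (a i : ℕ))
    (ha2 : (a' (Fin.last n) : ℕ) = c - 2 * b) :
    (∃ S : Finset (Fin n), ∑ i ∈ S, (a i : ℕ) = b) ↔
    (∃ T : Finset (Fin (n + 1)), ∑ i ∈ T, (a' i : ℕ) = ∑ i ∈ Tᶜ, (a' i : ℕ)) := by
  have hinj : Function.Injective (Fin.castSucc : Fin n → Fin (n + 1)) :=
    Fin.castSucc_injective n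
  have key : ∀ T : Finset (Fin (n + 1)), ∑ i ∈ T, (a' i : ℕ) =
      (∑ i ∈ Finset.univ.filter (fun i => i.castSucc ∈ T), (a i : ℕ)) +
      (if Fin.last n ∈ T then c - 2 * b else 0) := by
    intro T
    have h : ∑ i ∈ T, (a' i : ℕ) = ∑ i : Fin (n + 1), if i ∈ T then (a' i : ℕ) else 0 := by
      rw [Finset.sum_ite_mem, Finset.univ_inter]
    rw [h, Fin.sum_univ_castSucc, Finset.sum_filter]
    simp only [ha1, ha2]
  have htot : ∀ T : Finset (Fin (n + 1)),
      ∑ i ∈ T, (a' i : ℕ) + ∑ i ∈ Tᶜ, (a' i : ℕ) = c + (c - 2 * b) := by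
    intro T
    rw [Finset.sum_add_sum_compl, Fin.sum_univ_castSucc]
    simp only [ha1, ha2, ← hc]
  have hSc : ∀ S : Finset (Fin n), ∑ i ∈ S, (a i : ℕ) + ∑ i ∈ Sᶜ, (a i : ℕ) = c := by
    intro S; rw [Finset.sum_add_sum_compl, hc]
  constructor
  · rintro ⟨S, hS⟩
    refine ⟨insert (Fin.last n) (S.image Fin.castSucc), ?_⟩
    have h1 : Finset.univ.filter
        (fun i => i.castSucc ∈ insert (Fin.last n) (S.image Fin.castSucc)) = S := by
      ext i
      simp [Finset.mem_insert, Finset.mem_image, hinj.eq_iff, (Fin.castSucc_lt_last i).ne]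
    have h2 : Finset.univ.filter
        (fun i => i.castSucc ∈ (insert (Fin.last n) (S.image Fin.castSucc))ᶜ) = Sᶜ := by
      ext i
      simp [Finset.mem_compl, Finset.mem_insert, Finset.mem_image, hinj.eq_iff,
        (Fin.castSucc_lt_last i).ne]
    have e1 := key (insert (Fin.last n) (S.image Fin.castSucc))
    have e2 := key (insert (Fin.last n) (S.image Fin.castSucc))ᶜ
    rw [h1, if_pos (Finset.mem_insert_self _ _)] at e1
    rw [h2, if_neg (by simp)] at e2
    have := hSc S
    omega
  · rintro ⟨T, hT⟩
    have htT := htot T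
    by_cases hl : Fin.last n ∈ T
    · refine ⟨Finset.univ.filter (fun i => i.castSucc ∈ T), ?_⟩
      have e := key T
      rw [if_pos hl] at e
      omega
    · refine ⟨Finset.univ.filter (fun i => i.castSucc ∈ Tᶜ), ?_⟩
      have e := key Tᶜ
      rw [if_pos (Finset.mem_compl.mpr hl)] at e
      omega
end

section
/- Let a : Fin n → ℕ+ and b₁ ≤ b₂ be positive integers with b₂ < ∑ i, a i. Let A = ∑ i, a i. Extend to a' : Fin (n + (b₂ - b₁ + 1)) → ℕ+ with a' agreeing with a on the first n indices and a' (n + j) = A + j for j ∈ [0, b₂ - b₁]. Then (∃ S ⊆ Fin n, b₁ ≤ ∑_{i ∈ S} a i ∧ ∑_{i ∈ S} a i ≤ b₂) if and only if (∃ T ⊆ Fin (n + (b₂ - b₁ + 1)), ∑_{i ∈ T} a' i = b₂ + A). -/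
/-!
Split a subset `T` of the extended index set into its old part `S` and its new part `J`.
Every new value is at least `A` and every old subset sums to at most `A`; since `0 < b₂ < A`,
the target `b₂ + A` lies strictly between `A` and `2A`, so `J` is a single index `j`, and then
`∑ S = b₂ - j` ranges exactly over `[b₁, b₂]` as `j` ranges over `[0, b₂ - b₁]`.
-/

open Finset

theorem Fin.exists_finset_sum_add_iff {M : Type*} [AddCommMonoid M] {n m : ℕ}
    (f : Fin (n + m) → M) (p : M → Prop) :
    (∃ T : Finset (Fin (n + m)), p (∑ i ∈ T, f i)) ↔
      ∃ (S : Finset (Fin n)) (J : Finset (Fin m)),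
        p (∑ i ∈ S, f (Fin.castAdd m i) + ∑ j ∈ J, f (Fin.natAdd n j)) := by
  constructor
  · rintro ⟨T, hT⟩
    set U := T.map finSumFinEquiv.symm.toEmbedding
    refine ⟨U.toLeft, U.toRight, ?_⟩
    have hU : ∑ x ∈ U, f (finSumFinEquiv x) = ∑ i ∈ T, f i := by
      simp only [U, sum_map, Equiv.coe_toEmbedding, Equiv.apply_symm_apply]
    rw [← toLeft_disjSum_toRight (u := U), sum_disjSum] at hU
    simp only [finSumFinEquiv_apply_left, finSumFinEquiv_apply_right] at hU
    rwa [hU]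
  · rintro ⟨S, J, h⟩
    refine ⟨(S.disjSum J).map finSumFinEquiv.toEmbedding, ?_⟩
    simpa only [sum_map, sum_disjSum, Equiv.coe_toEmbedding, finSumFinEquiv_apply_left,
      finSumFinEquiv_apply_right] using h

theorem Finset.exists_eq_singleton_of_add_sum_eq {ι : Type*} {J : Finset ι} {w : ι → ℕ}
    {s A t : ℕ} (h : s + ∑ j ∈ J, w j = t) (hw : ∀ j ∈ J, A ≤ w j) (hs : s ≤ A)
    (hAt : A < t) (ht : t < 2 * A) : ∃ j, J = {j} := by
  rw [← card_eq_one]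
  have hcard : #J * A ≤ ∑ j ∈ J, w j := by
    simpa only [smul_eq_mul] using card_nsmul_le_sum J w A hw
  have hpos : #J ≠ 0 := by
    intro h0
    rw [card_eq_zero.mp h0, sum_empty] at h
    omega
  have hlt : #J < 2 := by
    by_contra! h2
    have := Nat.mul_le_mul_right A h2
    omega
  omega

theorem stmt4 (n : ℕ) (a : Fin n → ℕ+) (b₁ b₂ : ℕ) (hb₁ : 0 < b₁) (h12 : b₁ ≤ b₂)
    (A : ℕ) (hA : A = ∑ i, (a i : ℕ)) (hb₂ : b₂ < A)
    (a' : Fin (n + (b₂ - b₁ + 1)) → ℕ+)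
    (ha1 : ∀ i : Fin n, (a' (Fin.castAdd (b₂ - b₁ + 1) i) : ℕ) = (a i : ℕ))
    (ha2 : ∀ j : Fin (b₂ - b₁ + 1), (a' (Fin.natAdd n j) : ℕ) = A + (j : ℕ)) :
    (∃ S : Finset (Fin n), b₁ ≤ ∑ i ∈ S, (a i : ℕ) ∧ ∑ i ∈ S, (a i : ℕ) ≤ b₂) ↔
    (∃ T : Finset (Fin (n + (b₂ - b₁ + 1))), ∑ i ∈ T, (a' i : ℕ) = b₂ + A) := by
  have hsum_le (S : Finset (Fin n)) : ∑ i ∈ S, (a i : ℕ) ≤ A := by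
    rw [hA]
    exact sum_le_sum_of_subset (subset_univ S)
  rw [Fin.exists_finset_sum_add_iff (fun i ↦ (a' i : ℕ)) (· = b₂ + A)]
  simp only [ha1, ha2]
  constructor
  · rintro ⟨S, h₁, h₂⟩
    refine ⟨S, {⟨b₂ - ∑ i ∈ S, (a i : ℕ), by omega⟩}, ?_⟩
    rw [sum_singleton, Fin.val_mk]
    omega
  · rintro ⟨S, J, hT⟩
    obtain ⟨j, rfl⟩ := exists_eq_singleton_of_add_sum_eq hT
      (fun j _ ↦ Nat.le_add_right A j) (hsum_le S) (by omega) (by omega)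
    rw [sum_singleton] at hT
    exact ⟨S, by omega, by omega⟩
end

section
/- Let G = (V, E) be a directed acyclic graph, s ∈ V, and c ∈ ℕ+. Form G' by adding, for each sink v of G, a new vertex v̄ and a new edge (v, v̄); let n = |V'| where V' is the new vertex set. Assign weight 1 to each original edge and weight n + 1 to each new edge (v, v̄). Then G has a path from s to a sink of G of length exactly c if and only if G' has a path from s to some vertex whose total edge weight equals c + n + 1. -/
/-- The total edge weight of a walk `s :: l` with respect to the edge-weight
function `w`. -/
def walkWeight {α : Type*} (w : α → α → ℕ) : α → List α → ℕ
  | _, [] => 0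
  | s, v :: l => w s v + walkWeight w v l

theorem stmt11 (V : Type) [Fintype V]
    (G : V → V → Prop) (hacyc : ∀ v, ¬ Relation.TransGen G v v)
    (s : V) (c : ℕ) (hc : 0 < c)
    (n : ℕ) (hn : n = Fintype.card V + Nat.card {v : V // ∀ u, ¬ G v u})
    (G' : (V ⊕ V) → (V ⊕ V) → Prop)
    (hG' : G' = fun x y =>
      match x, y with
      | Sum.inl u, Sum.inl v => G u v
      | Sum.inl u, Sum.inr v => u = v ∧ ∀ z, ¬ G u z
      | _, _ => False)
    (w' : (V ⊕ V) → (V ⊕ V) → ℕ)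
    (hw' : w' = fun x y =>
      match x, y with
      | Sum.inl _, Sum.inl _ => 1
      | Sum.inl _, Sum.inr _ => n + 1
      | _, _ => 0) :
    (∃ (l : List V) (v : V), List.Chain G s l ∧ l.length = c ∧
        l.getLast? = some v ∧ ∀ u, ¬ G v u) ↔
    (∃ l' : List (V ⊕ V), List.Chain G' (Sum.inl s) l' ∧
        walkWeight w' (Sum.inl s) l' = c + n + 1) := by
  subst hG' hw'
  have hcardn : Fintype.card V ≤ n := hn ▸ Nat.le_add_right _ _
  -- reachability along a chain
  have htrans : ∀ (l : List V) (s x : V), List.Chain G s l → x ∈ l →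
      Relation.TransGen G s x := by
    intro l
    induction l with
    | nil => intro s x _ hx; simp at hx
    | cons v t ih =>
      intro s x hch hx
      rcases List.chain_cons.mp hch with ⟨hsv, hct⟩
      rcases List.mem_cons.mp hx with rfl | hx
      · exact Relation.TransGen.single hsv
      · exact Relation.TransGen.head hsv (ih v x hct hx)
  have hnodup : ∀ (l : List V) (s : V), List.Chain G s l → (s :: l).Nodup := by
    intro l
    induction l with
    | nil => intro s _; simp
    | cons v t ih =>
      intro s hch
      rcases List.chain_cons.mp hch with ⟨hsv, hct⟩
      refine List.nodup_cons.mpr ⟨?_, ih v hct⟩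
      intro hs
      rcases List.mem_cons.mp hs with rfl | hs
      · exact hacyc s (Relation.TransGen.single hsv)
      · exact hacyc s (Relation.TransGen.head hsv (htrans t v s hct hs))
  have hlenbound : ∀ (l : List V) (s : V), List.Chain G s l → l.length < n + 1 := by
    intro l s hch
    have h1 := (hnodup l s hch).length_le_card
    simp only [List.length_cons] at h1
    omega
  -- weight of an all-inl walk
  have hww : ∀ (l : List V) (s : V),
      walkWeight (fun x y => match x, y with
        | Sum.inl _, Sum.inl _ => 1
        | Sum.inl _, Sum.inr _ => n + 1
        | _, _ => 0) (Sum.inl s : V ⊕ V) (l.map Sum.inl) = l.length := by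
    intro l
    induction l with
    | nil => intro s; rfl
    | cons v t ih => intro s; simp [walkWeight, ih v]; omega
  -- weight of inl walk followed by one inr edge
  have hww2 : ∀ (l : List V) (s : V) (v : V),
      walkWeight (fun x y => match x, y with
        | Sum.inl _, Sum.inl _ => 1
        | Sum.inl _, Sum.inr _ => n + 1
        | _, _ => 0) (Sum.inl s : V ⊕ V) (l.map Sum.inl ++ [Sum.inr v])
        = l.length + n + 1 := by
    intro l
    induction l with
    | nil => intro s v; simp [walkWeight]
    | cons a t ih => intro s v; simp [walkWeight, ih a]; omega
  have hbuild : ∀ (l : List V) (s v : V), List.Chain G s l →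
      ((l = [] ∧ s = v) ∨ l.getLast? = some v) → (∀ u, ¬ G v u) →
      List.Chain (fun x y => match x, y with
        | Sum.inl u, Sum.inl v => G u v
        | Sum.inl u, Sum.inr v => u = v ∧ ∀ z, ¬ G u z
        | _, _ => False) (Sum.inl s) (l.map Sum.inl ++ [Sum.inr v]) := by
    intro l
    induction l with
    | nil =>
      intro s v _ hcond hsink
      rcases hcond with ⟨_, rfl⟩ | h
      · exact List.chain_cons.mpr ⟨⟨rfl, hsink⟩, List.Chain.nil⟩
      · simp at h
    | cons a t ih =>
      intro s v hchain hcond hsink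
      rcases List.chain_cons.mp hchain with ⟨hsa, hct⟩
      refine List.chain_cons.mpr ⟨hsa, ih a v hct ?_ hsink⟩
      rcases hcond with ⟨h, _⟩ | h
      · exact absurd h (by simp)
      · cases t with
        | nil => simp at h; exact Or.inl ⟨rfl, h ▸ rfl⟩
        | cons b t' => exact Or.inr (by rwa [List.getLast?_cons_cons] at h)
  constructor
  · rintro ⟨l, v, hchain, hlen, hlast, hsink⟩
    exact ⟨l.map Sum.inl ++ [Sum.inr v],
      hbuild l s v hchain (Or.inr hlast) hsink, by rw [hww2, hlen]⟩
  · rintro ⟨l', hchain, hwt⟩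
    -- structure of a chain in G'
    have hstruct : ∀ (l' : List (V ⊕ V)) (s : V),
        List.Chain (fun x y => match x, y with
          | Sum.inl u, Sum.inl v => G u v
          | Sum.inl u, Sum.inr v => u = v ∧ ∀ z, ¬ G u z
          | _, _ => False) (Sum.inl s) l' →
        (∃ l : List V, l' = l.map Sum.inl ∧ List.Chain G s l) ∨
        (∃ (l : List V) (v : V), l' = l.map Sum.inl ++ [Sum.inr v] ∧
          List.Chain G s l ∧ ((l = [] ∧ s = v) ∨ l.getLast? = some v) ∧
          (∀ u, ¬ G v u)) := by
      intro l'
      induction l' with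
      | nil => intro s _; exact Or.inl ⟨[], rfl, List.Chain.nil⟩
      | cons x t ih =>
        intro s hch
        rcases List.chain_cons.mp hch with ⟨hstep, hct⟩
        cases x with
        | inl a =>
          have hGsa : G s a := hstep
          rcases ih a hct with ⟨l, rfl, hcl⟩ | ⟨l, v, rfl, hcl, hcond, hsink⟩
          · exact Or.inl ⟨a :: l, rfl, List.chain_cons.mpr ⟨hGsa, hcl⟩⟩
          · refine Or.inr ⟨a :: l, v, rfl, List.chain_cons.mpr ⟨hGsa, hcl⟩,
              Or.inr ?_, hsink⟩
            rcases hcond with ⟨rfl, rfl⟩ | h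
            · simp
            · cases l with
              | nil => simp at h
              | cons b t' => rwa [List.getLast?_cons_cons]
        | inr a =>
          obtain ⟨rfl, hsink⟩ : s = a ∧ ∀ z, ¬ G s z := hstep
          cases t with
          | nil => exact Or.inr ⟨[], s, rfl, List.Chain.nil, Or.inl ⟨rfl, rfl⟩, hsink⟩
          | cons y t' =>
            rcases List.chain_cons.mp hct with ⟨hstep2, _⟩
            cases y <;> exact absurd hstep2 (by simp)
    rcases hstruct l' s hchain with ⟨l, rfl, hcl⟩ | ⟨l, v, rfl, hcl, hcond, hsink⟩
    · rw [hww] at hwt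
      have := hlenbound l s hcl
      omega
    · rw [hww2] at hwt
      have hlen : l.length = c := by omega
      have hne : l ≠ [] := by
        intro h; rw [h] at hlen; simp at hlen; omega
      rcases hcond with ⟨h, _⟩ | h
      · exact absurd h hne
      · exact ⟨l, v, hcl, hlen, h, hsink⟩
end
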